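/- arXiv:1201.2834 — 2 statements merged into one kernel-verified Lean document; each statement's English description precedes it below -/
import Mathlib

section
/- Let γ be a player-1 selector in a concurrent game with safe set F, let v = ⟨1⟩val^{γ̄}(Safe(F)), let I = {s ∈ S ∖ (W₁ ∪ T) | Pre₁(v)(s) > v(s)}, and let γ' be a player-1 selector that agrees with γ at all states not in I and satisfies Pre_{1:γ'}(v)(s) = Pre₁(v)(s) > v(s) for all s ∈ I. Let v' = ⟨1⟩val^{γ̄'}(Safe(F)). Then v'(s) ≥ Pre₁(v)(s) for all states s; consequently v'(s) ≥ v(s) for all states s, and v'(s) > v(s) for all s ∈ I. -/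
open scoped Classical

/-- A (two-player) concurrent game structure: a finite state space `S`, a finite
set `M` of moves, move assignments `Γ₁ Γ₂ : S → Finset M`, and a probabilistic
transition function `δ`. -/
structure CGame (S : Type) (M : Type) where
  Γ₁ : S → Finset M
  Γ₂ : S → Finset M
  δ : S → M → M → S → ℝ

namespace CGame

variable {S M : Type} [Fintype S] [DecidableEq S] [Fintype M] [DecidableEq M]

/-- Well-formedness of a concurrent game structure: move sets are nonempty and
`δ s a b` is a probability distribution over states. -/
def IsGame (G : CGame S M) : Prop :=
  (∀ s, (G.Γ₁ s).Nonempty) ∧ (∀ s, (G.Γ₂ s).Nonempty) ∧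
    (∀ s a b t, 0 ≤ G.δ s a b t) ∧ (∀ s a b, (∑ t, G.δ s a b t) = 1)

/-- `x : M → ℝ` is a probability distribution supported on `A`. -/
def IsDistOn (A : Finset M) (x : M → ℝ) : Prop :=
  (∀ a, 0 ≤ x a) ∧ (∀ a, x a ≠ 0 → a ∈ A) ∧ (∑ a, x a) = 1

/-- A selector for player 1. -/
def IsSel1 (G : CGame S M) (ξ : S → M → ℝ) : Prop := ∀ s, IsDistOn (G.Γ₁ s) (ξ s)

/-- A selector for player 2. -/
def IsSel2 (G : CGame S M) (ξ : S → M → ℝ) : Prop := ∀ s, IsDistOn (G.Γ₂ s) (ξ s)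

/-- A strategy for player 1: maps a history (past states `w` and current state `s`)
to a distribution over the moves available at `s`. -/
def IsStrat1 (G : CGame S M) (σ : List S → S → M → ℝ) : Prop :=
  ∀ w s, IsDistOn (G.Γ₁ s) (σ w s)

/-- A strategy for player 2. -/
def IsStrat2 (G : CGame S M) (σ : List S → S → M → ℝ) : Prop :=
  ∀ w s, IsDistOn (G.Γ₂ s) (σ w s)

/-- The memoryless strategy induced by a selector. -/
def ml (ξ : S → M → ℝ) : List S → S → M → ℝ := fun _ s => ξ s

/-- The pure (Dirac) distribution on a move `b`. -/
def pureDist (b : M) : M → ℝ := fun b' => if b' = b then 1 else 0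

/-- The player-1 selector choosing all available moves uniformly at random. -/
noncomputable def uniformSel (G : CGame S M) : S → M → ℝ :=
  fun s a => if a ∈ G.Γ₁ s then (1 : ℝ) / (G.Γ₁ s).card else 0

/-- Probability of reaching `T` within `n` steps, starting from history `w`
and current state `s`, under strategies `σ₁, σ₂`. -/
noncomputable def reachW (G : CGame S M) (σ₁ σ₂ : List S → S → M → ℝ) (T : Set S) :
    ℕ → List S → S → ℝ
  | 0, _, s => if s ∈ T then 1 else 0
  | n + 1, w, s =>
      if s ∈ T then 1
      else ∑ a : M, ∑ b : M, ∑ t : S,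
        σ₁ w s a * σ₂ w s b * G.δ s a b t * reachW G σ₁ σ₂ T n (w ++ [s]) t

/-- Probability of staying in `F` for `n` steps, starting from history `w`
and current state `s`, under strategies `σ₁, σ₂`. -/
noncomputable def safeW (G : CGame S M) (σ₁ σ₂ : List S → S → M → ℝ) (F : Set S) :
    ℕ → List S → S → ℝ
  | 0, _, s => if s ∈ F then 1 else 0
  | n + 1, w, s =>
      if s ∈ F then
        ∑ a : M, ∑ b : M, ∑ t : S,
          σ₁ w s a * σ₂ w s b * G.δ s a b t * safeW G σ₁ σ₂ F n (w ++ [s]) t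
      else 0

/-- `Pr_s^{σ₁,σ₂}(Reach T)`: probability of eventually reaching `T` from `s`. -/
noncomputable def prReach (G : CGame S M) (σ₁ σ₂ : List S → S → M → ℝ) (T : Set S)
    (s : S) : ℝ :=
  ⨆ n : ℕ, reachW G σ₁ σ₂ T n [] s

/-- `Pr_s^{σ₁,σ₂}(Safe F)`: probability that the play stays in `F` forever. -/
noncomputable def prSafe (G : CGame S M) (σ₁ σ₂ : List S → S → M → ℝ) (F : Set S)
    (s : S) : ℝ :=
  ⨅ n : ℕ, safeW G σ₁ σ₂ F n [] s

/-- `⟨1⟩val^{σ₁}(Reach T)(s) = inf_{σ₂} Pr_s^{σ₁,σ₂}(Reach T)`. -/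
noncomputable def valReachUnder (G : CGame S M) (σ₁ : List S → S → M → ℝ) (T : Set S)
    (s : S) : ℝ :=
  ⨅ σ₂ : {σ // IsStrat2 G σ}, prReach G σ₁ σ₂.1 T s

/-- `⟨1⟩val(Reach T)(s) = sup_{σ₁} inf_{σ₂} Pr_s^{σ₁,σ₂}(Reach T)`. -/
noncomputable def valReach (G : CGame S M) (T : Set S) (s : S) : ℝ :=
  ⨆ σ₁ : {σ // IsStrat1 G σ}, valReachUnder G σ₁.1 T s

/-- `⟨1⟩val^{σ₁}(Safe F)(s) = inf_{σ₂} Pr_s^{σ₁,σ₂}(Safe F)`. -/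
noncomputable def valSafeUnder (G : CGame S M) (σ₁ : List S → S → M → ℝ) (F : Set S)
    (s : S) : ℝ :=
  ⨅ σ₂ : {σ // IsStrat2 G σ}, prSafe G σ₁ σ₂.1 F s

/-- `⟨1⟩val(Safe F)(s) = sup_{σ₁} inf_{σ₂} Pr_s^{σ₁,σ₂}(Safe F)`. -/
noncomputable def valSafe (G : CGame S M) (F : Set S) (s : S) : ℝ :=
  ⨆ σ₁ : {σ // IsStrat1 G σ}, valSafeUnder G σ₁.1 F s

/-- `W₂ = {s | ⟨1⟩val(Reach T)(s) = 0}`. -/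
noncomputable def W2 (G : CGame S M) (T : Set S) : Set S := {s | valReach G T s = 0}

/-- `W₁ = {s | ⟨1⟩val(Safe F)(s) = 1}`. -/
noncomputable def W1 (G : CGame S M) (F : Set S) : Set S := {s | valSafe G F s = 1}

/-- A state is absorbing if for all moves the successor is the state itself. -/
def Absorbing (G : CGame S M) (s : S) : Prop := ∀ a b, G.δ s a b s = 1

/-- A player-1 strategy is proper if against every player-2 strategy, from every
state the set `T ∪ W₂` is reached with probability 1. -/
noncomputable def Proper (G : CGame S M) (T : Set S) (σ₁ : List S → S → M → ℝ) : Prop :=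
  ∀ σ₂, IsStrat2 G σ₂ → ∀ s, prReach G σ₁ σ₂ (T ∪ W2 G T) s = 1

/-- `Pre_{ξ₁,ξ₂}(v)(s)`: one-step expectation of `v` at `s` when the players use the
one-state selectors `x, y`. -/
noncomputable def preSS (G : CGame S M) (v : S → ℝ) (s : S) (x y : M → ℝ) : ℝ :=
  ∑ a : M, ∑ b : M, ∑ t : S, v t * G.δ s a b t * x a * y b

/-- `Pre_{1:ξ₁}(v)(s) = inf_{ξ₂} Pre_{ξ₁,ξ₂}(v)(s)`. -/
noncomputable def pre1Sel (G : CGame S M) (v : S → ℝ) (s : S) (x : M → ℝ) : ℝ :=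
  ⨅ y : {y : M → ℝ // IsDistOn (G.Γ₂ s) y}, preSS G v s x y.1

/-- `Pre₁(v)(s) = sup_{ξ₁} inf_{ξ₂} Pre_{ξ₁,ξ₂}(v)(s)`. -/
noncomputable def pre1 (G : CGame S M) (v : S → ℝ) (s : S) : ℝ :=
  ⨆ x : {x : M → ℝ // IsDistOn (G.Γ₁ s) x}, pre1Sel G v s x.1

/-- The value-iteration sequence: `u 0 = [T]`, `u (k+1) = Pre₁ (u k)`. -/
noncomputable def valIter (G : CGame S M) (T : Set S) : ℕ → S → ℝ
  | 0 => fun s => if s ∈ T then 1 else 0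
  | n + 1 => fun s => pre1 G (valIter G T n) s

/-- The entry time `ℓ_k(s) = min {j ≤ k | u_j(s) = u_k(s)}`. -/
noncomputable def entryTime (G : CGame S M) (T : Set S) (k : ℕ) (s : S) : ℕ :=
  sInf {j : ℕ | valIter G T j s = valIter G T k s}

/-- `dest(s,b)` under a player-1 selector `η`: possible successors of `s` when
player 1 plays `η` and player 2 plays `b`. -/
def destSet (G : CGame S M) (η : S → M → ℝ) (s : S) (b : M) : Set S :=
  {t | ∃ a, η s a ≠ 0 ∧ G.δ s a b t ≠ 0}

/-- `OptSel(v,s)`: the set of optimal one-state player-1 selectors for `v` at `s`. -/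
noncomputable def OptSel (G : CGame S M) (v : S → ℝ) (s : S) : Set (M → ℝ) :=
  {x | IsDistOn (G.Γ₁ s) x ∧ pre1Sel G v s x = pre1 G v s}

/-- `CountOpt(v,s,x)`: the set of counter-optimal player-2 moves against `x`. -/
noncomputable def countOpt (G : CGame S M) (v : S → ℝ) (s : S) (x : M → ℝ) : Finset M :=
  (G.Γ₂ s).filter fun b => preSS G v s x (pureDist b) = pre1 G v s

/-- The support of a one-state selector, as a `Finset`. -/
noncomputable def fsupp (x : M → ℝ) : Finset M := Finset.univ.filter fun a => x a ≠ 0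

/-- `OptSelCount(v,s)`: pairs `(A,B)` such that some optimal selector has support `A`
and counter-optimal action set `B`. -/
noncomputable def optSelCount (G : CGame S M) (v : S → ℝ) (s : S) :
    Set (Finset M × Finset M) :=
  {p | ∃ x ∈ OptSel G v s, fsupp x = p.1 ∧ countOpt G v s x = p.2}

/-- A selector is `k`-uniform if every probability it assigns is of the form `i/j`
with `0 ≤ i ≤ j ≤ k`. -/
def KUniform (k : ℕ) (ξ : S → M → ℝ) : Prop :=
  ∀ s a, ∃ i j : ℕ, i ≤ j ∧ j ≤ k ∧ ξ s a = (i : ℝ) / (j : ℝ)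

end CGame

namespace CGame

section Aux

variable {S M : Type} [Fintype S] [DecidableEq S] [Fintype M] [DecidableEq M]

set_option linter.unusedSectionVars false

/-- uniform distribution on a finset -/
noncomputable def unif (A : Finset M) : M → ℝ := fun a => if a ∈ A then (1:ℝ)/A.card else 0

lemma isDistOn_unif {A : Finset M} (hA : A.Nonempty) : IsDistOn A (unif A) := by
  have hc : (0:ℝ) < A.card := by exact_mod_cast Finset.card_pos.mpr hA
  refine ⟨fun a => ?_, fun a ha => ?_, ?_⟩
  · unfold unif; split <;> positivity
  · by_contra h; simp [unif, h] at ha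
  · simp only [unif]
    rw [Finset.sum_ite_mem, Finset.univ_inter, Finset.sum_const, nsmul_eq_mul]
    field_simp

lemma nonempty_dist2 (G : CGame S M) (hG : G.IsGame) (s : S) :
    Nonempty {y : M → ℝ // IsDistOn (G.Γ₂ s) y} :=
  ⟨⟨unif (G.Γ₂ s), isDistOn_unif (hG.2.1 s)⟩⟩

lemma nonempty_dist1 (G : CGame S M) (hG : G.IsGame) (s : S) :
    Nonempty {x : M → ℝ // IsDistOn (G.Γ₁ s) x} :=
  ⟨⟨unif (G.Γ₁ s), isDistOn_unif (hG.1 s)⟩⟩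

lemma nonempty_strat2 (G : CGame S M) (hG : G.IsGame) :
    Nonempty {σ : List S → S → M → ℝ // IsStrat2 G σ} :=
  ⟨⟨fun _ s => unif (G.Γ₂ s), fun _ s => isDistOn_unif (hG.2.1 s)⟩⟩

lemma nonempty_strat1 (G : CGame S M) (hG : G.IsGame) :
    Nonempty {σ : List S → S → M → ℝ // IsStrat1 G σ} :=
  ⟨⟨fun _ s => unif (G.Γ₁ s), fun _ s => isDistOn_unif (hG.1 s)⟩⟩

lemma isStrat1_ml {G : CGame S M} {γ : S → M → ℝ} (h : IsSel1 G γ) : IsStrat1 G (ml γ) :=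
  fun _ s => h s

lemma safeW_nonneg (G : CGame S M) (hG : G.IsGame) {σ₁ σ₂ : List S → S → M → ℝ}
    (h₁ : IsStrat1 G σ₁) (h₂ : IsStrat2 G σ₂) (F : Set S) :
    ∀ (n : ℕ) (w : List S) (s : S), 0 ≤ safeW G σ₁ σ₂ F n w s := by
  intro n
  induction n with
  | zero => intro w s; simp only [safeW]; split <;> norm_num
  | succ n ih =>
    intro w s
    simp only [safeW]
    split
    · refine Finset.sum_nonneg fun a _ => Finset.sum_nonneg fun b _ =>
        Finset.sum_nonneg fun t _ => ?_
      have := (h₁ w s).1 a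
      have := (h₂ w s).1 b
      have := hG.2.2.1 s a b t
      have := ih (w ++ [s]) t
      positivity
    · exact le_refl 0

lemma safeW_le_one (G : CGame S M) (hG : G.IsGame) {σ₁ σ₂ : List S → S → M → ℝ}
    (h₁ : IsStrat1 G σ₁) (h₂ : IsStrat2 G σ₂) (F : Set S) :
    ∀ (n : ℕ) (w : List S) (s : S), safeW G σ₁ σ₂ F n w s ≤ 1 := by
  intro n
  induction n with
  | zero => intro w s; simp only [safeW]; split <;> norm_num
  | succ n ih =>
    intro w s
    simp only [safeW]
    split
    · calc ∑ a : M, ∑ b : M, ∑ t : S,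
            σ₁ w s a * σ₂ w s b * G.δ s a b t * safeW G σ₁ σ₂ F n (w ++ [s]) t
          ≤ ∑ a : M, ∑ b : M, ∑ t : S, σ₁ w s a * σ₂ w s b * G.δ s a b t := by
            refine Finset.sum_le_sum fun a _ => Finset.sum_le_sum fun b _ =>
              Finset.sum_le_sum fun t _ => ?_
            have hn : 0 ≤ σ₁ w s a * σ₂ w s b * G.δ s a b t := by
              have := (h₁ w s).1 a
              have := (h₂ w s).1 b
              have := hG.2.2.1 s a b t
              positivity
            exact mul_le_of_le_one_right hn (ih (w ++ [s]) t)
        _ = 1 := by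
            have h3 : ∀ a b, (∑ t : S, σ₁ w s a * σ₂ w s b * G.δ s a b t)
                = σ₁ w s a * σ₂ w s b := by
              intro a b
              rw [← Finset.mul_sum, hG.2.2.2 s a b, mul_one]
            simp only [h3, ← Finset.mul_sum, (h₂ w s).2.2, mul_one, (h₁ w s).2.2]
    · norm_num

lemma safeW_zero_of_not_mem (G : CGame S M) {σ₁ σ₂ : List S → S → M → ℝ} (F : Set S)
    {s : S} (hs : s ∉ F) : ∀ (n : ℕ) (w : List S), safeW G σ₁ σ₂ F n w s = 0 := by
  intro n w
  cases n <;> simp [safeW, hs]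

lemma safeW_succ_le (G : CGame S M) (hG : G.IsGame) {σ₁ σ₂ : List S → S → M → ℝ}
    (h₁ : IsStrat1 G σ₁) (h₂ : IsStrat2 G σ₂) (F : Set S) :
    ∀ (n : ℕ) (w : List S) (s : S),
      safeW G σ₁ σ₂ F (n + 1) w s ≤ safeW G σ₁ σ₂ F n w s := by
  intro n
  induction n with
  | zero =>
    intro w s
    by_cases hs : s ∈ F
    · have h1 := safeW_le_one G hG h₁ h₂ F 1 w s
      simpa [safeW, hs] using h1
    · simp [safeW, hs]
  | succ n ih =>
    intro w s
    by_cases hs : s ∈ F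
    · simp only [safeW, if_pos hs]
      refine Finset.sum_le_sum fun a _ => Finset.sum_le_sum fun b _ =>
        Finset.sum_le_sum fun t _ => ?_
      have hn : 0 ≤ σ₁ w s a * σ₂ w s b * G.δ s a b t := by
        have := (h₁ w s).1 a
        have := (h₂ w s).1 b
        have := hG.2.2.1 s a b t
        positivity
      exact mul_le_mul_of_nonneg_left (ih (w ++ [s]) t) hn
    · simp [safeW, hs]

lemma safeW_antitone (G : CGame S M) (hG : G.IsGame) {σ₁ σ₂ : List S → S → M → ℝ}
    (h₁ : IsStrat1 G σ₁) (h₂ : IsStrat2 G σ₂) (F : Set S) (w : List S) (s : S) :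
    Antitone fun n => safeW G σ₁ σ₂ F n w s :=
  antitone_nat_of_succ_le fun n => safeW_succ_le G hG h₁ h₂ F n w s

/-- shift a strategy by a history prefix -/
def shiftStrat (σ : List S → S → M → ℝ) (w0 : List S) : List S → S → M → ℝ :=
  fun u x => σ (w0 ++ u) x

lemma isStrat2_shift {G : CGame S M} {σ : List S → S → M → ℝ} (h : IsStrat2 G σ)
    (w0 : List S) : IsStrat2 G (shiftStrat σ w0) := fun u x => h (w0 ++ u) x

lemma safeW_shift (G : CGame S M) (σ₁ σ₂ : List S → S → M → ℝ) (F : Set S) (w0 : List S) :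
    ∀ (n : ℕ) (w : List S) (s : S),
      safeW G σ₁ σ₂ F n (w0 ++ w) s
        = safeW G (shiftStrat σ₁ w0) (shiftStrat σ₂ w0) F n w s := by
  intro n
  induction n with
  | zero => intro w s; simp [safeW]
  | succ n ih =>
    intro w s
    simp only [safeW]
    split
    · refine Finset.sum_congr rfl fun a _ => Finset.sum_congr rfl fun b _ =>
        Finset.sum_congr rfl fun t _ => ?_
      have h2 : w0 ++ w ++ [s] = w0 ++ (w ++ [s]) := by simp [List.append_assoc]
      rw [h2, ih (w ++ [s]) t]
      rfl
    · rfl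

lemma shiftStrat_ml (γ : S → M → ℝ) (w0 : List S) : shiftStrat (ml γ) w0 = ml γ := rfl

lemma safeW_congr (G : CGame S M) (σ₁ : List S → S → M → ℝ)
    {σ₂ σ₂' : List S → S → M → ℝ} (F : Set S) :
    ∀ (n : ℕ) (w : List S) (s : S),
      σ₂ w s = σ₂' w s → (∀ u x, σ₂ (w ++ s :: u) x = σ₂' (w ++ s :: u) x) →
      safeW G σ₁ σ₂ F n w s = safeW G σ₁ σ₂' F n w s := by
  intro n
  induction n with
  | zero => intro w s _ _; rfl
  | succ n ih =>
    intro w s h0 hext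
    simp only [safeW]
    split
    · refine Finset.sum_congr rfl fun a _ => Finset.sum_congr rfl fun b _ =>
        Finset.sum_congr rfl fun t _ => ?_
      rw [h0, ih (w ++ [s]) t (by simpa using hext [] t)
        (fun u x => by
          have := hext (t :: u) x
          simpa [List.append_assoc] using this)]
    · rfl

lemma prSafe_nonneg (G : CGame S M) (hG : G.IsGame) {σ₁ σ₂ : List S → S → M → ℝ}
    (h₁ : IsStrat1 G σ₁) (h₂ : IsStrat2 G σ₂) (F : Set S) (s : S) :
    0 ≤ prSafe G σ₁ σ₂ F s :=
  le_ciInf fun n => safeW_nonneg G hG h₁ h₂ F n [] s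

lemma prSafe_le_safeW (G : CGame S M) (hG : G.IsGame) {σ₁ σ₂ : List S → S → M → ℝ}
    (h₁ : IsStrat1 G σ₁) (h₂ : IsStrat2 G σ₂) (F : Set S) (s : S) (n : ℕ) :
    prSafe G σ₁ σ₂ F s ≤ safeW G σ₁ σ₂ F n [] s :=
  ciInf_le ⟨0, by rintro x ⟨m, rfl⟩; exact safeW_nonneg G hG h₁ h₂ F m [] s⟩ n

lemma prSafe_le_one (G : CGame S M) (hG : G.IsGame) {σ₁ σ₂ : List S → S → M → ℝ}
    (h₁ : IsStrat1 G σ₁) (h₂ : IsStrat2 G σ₂) (F : Set S) (s : S) :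
    prSafe G σ₁ σ₂ F s ≤ 1 :=
  (prSafe_le_safeW G hG h₁ h₂ F s 0).trans (safeW_le_one G hG h₁ h₂ F 0 [] s)

lemma valSafeUnder_nonneg (G : CGame S M) (hG : G.IsGame) {σ₁ : List S → S → M → ℝ}
    (h₁ : IsStrat1 G σ₁) (F : Set S) (s : S) : 0 ≤ valSafeUnder G σ₁ F s := by
  haveI := nonempty_strat2 G hG
  exact le_ciInf fun σ₂ => prSafe_nonneg G hG h₁ σ₂.2 F s

lemma valSafeUnder_le_one (G : CGame S M) (hG : G.IsGame) {σ₁ : List S → S → M → ℝ}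
    (h₁ : IsStrat1 G σ₁) (F : Set S) (s : S) : valSafeUnder G σ₁ F s ≤ 1 := by
  haveI := nonempty_strat2 G hG
  obtain ⟨σ₂⟩ := nonempty_strat2 G hG
  refine le_trans (ciInf_le ⟨0, ?_⟩ σ₂) (prSafe_le_one G hG h₁ σ₂.2 F s)
  rintro x ⟨τ, rfl⟩
  exact prSafe_nonneg G hG h₁ τ.2 F s

lemma valSafeUnder_le_prSafe (G : CGame S M) (hG : G.IsGame) {σ₁ : List S → S → M → ℝ}
    (h₁ : IsStrat1 G σ₁) (F : Set S) (s : S) {σ₂ : List S → S → M → ℝ}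
    (h₂ : IsStrat2 G σ₂) : valSafeUnder G σ₁ F s ≤ prSafe G σ₁ σ₂ F s :=
  ciInf_le ⟨0, by rintro x ⟨τ, rfl⟩; exact prSafe_nonneg G hG h₁ τ.2 F s⟩
    (⟨σ₂, h₂⟩ : {σ // IsStrat2 G σ})

lemma valSafeUnder_zero_of_not_mem (G : CGame S M) (hG : G.IsGame)
    {σ₁ : List S → S → M → ℝ} (h₁ : IsStrat1 G σ₁) (F : Set S) {s : S} (hs : s ∉ F) :
    valSafeUnder G σ₁ F s = 0 := by
  haveI := nonempty_strat2 G hG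
  refine le_antisymm ?_ (valSafeUnder_nonneg G hG h₁ F s)
  obtain ⟨σ₂⟩ := nonempty_strat2 G hG
  refine le_trans (valSafeUnder_le_prSafe G hG h₁ F s σ₂.2) ?_
  refine le_trans (prSafe_le_safeW G hG h₁ σ₂.2 F s 0) ?_
  simp [safeW, hs]

lemma delta_dirac (G : CGame S M) (hG : G.IsGame) {s : S} (h : Absorbing G s)
    (a b : M) (t : S) : G.δ s a b t = if t = s then 1 else 0 := by
  by_cases ht : t = s
  · simp [ht, h a b]
  · simp only [if_neg ht]
    have hsum := hG.2.2.2 s a b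
    have hnn : ∀ u, 0 ≤ G.δ s a b u := fun u => hG.2.2.1 s a b u
    have hsplit : ∑ u : S, G.δ s a b u = G.δ s a b s + ∑ u ∈ Finset.univ.erase s, G.δ s a b u := by
      rw [add_comm, Finset.sum_erase_add _ _ (Finset.mem_univ s)]
    rw [hsplit, h a b] at hsum
    have h0 : ∑ u ∈ Finset.univ.erase s, G.δ s a b u = 0 := by linarith
    have := Finset.sum_eq_zero_iff_of_nonneg (fun u _ => hnn u) |>.mp h0 t
      (Finset.mem_erase.mpr ⟨ht, Finset.mem_univ t⟩)
    exact this

lemma safeW_absorbing (G : CGame S M) (hG : G.IsGame) {σ₁ σ₂ : List S → S → M → ℝ}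
    (h₁ : IsStrat1 G σ₁) (h₂ : IsStrat2 G σ₂) (F : Set S) {s : S} (hs : s ∈ F)
    (habs : Absorbing G s) : ∀ (n : ℕ) (w : List S), safeW G σ₁ σ₂ F n w s = 1 := by
  intro n
  induction n with
  | zero => intro w; simp [safeW, hs]
  | succ n ih =>
    intro w
    simp only [safeW, if_pos hs]
    have hT : ∀ a b, (∑ t : S, σ₁ w s a * σ₂ w s b * G.δ s a b t
        * safeW G σ₁ σ₂ F n (w ++ [s]) t) = σ₁ w s a * σ₂ w s b := by
      intro a b
      have : ∀ t : S, σ₁ w s a * σ₂ w s b * G.δ s a b t * safeW G σ₁ σ₂ F n (w ++ [s]) t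
          = if t = s then σ₁ w s a * σ₂ w s b else 0 := by
        intro t
        rw [delta_dirac G hG habs a b t]
        by_cases ht : t = s
        · simp [ht, ih (w ++ [s])]
        · simp [ht]
      simp only [this]
      simp
    simp only [hT, ← Finset.mul_sum, (h₂ w s).2.2, mul_one, (h₁ w s).2.2]

lemma valSafeUnder_absorbing (G : CGame S M) (hG : G.IsGame) {σ₁ : List S → S → M → ℝ}
    (h₁ : IsStrat1 G σ₁) (F : Set S) {s : S} (hs : s ∈ F) (habs : Absorbing G s) :
    valSafeUnder G σ₁ F s = 1 := by
  haveI := nonempty_strat2 G hG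
  refine le_antisymm (valSafeUnder_le_one G hG h₁ F s) (le_ciInf fun σ₂ => le_ciInf fun n => ?_)
  rw [safeW_absorbing G hG h₁ σ₂.2 F hs habs n []]

lemma preSS_nonneg (G : CGame S M) (hG : G.IsGame) {v : S → ℝ} (hv : ∀ t, 0 ≤ v t)
    {s : S} {x y : M → ℝ} (hx : ∀ a, 0 ≤ x a) (hy : ∀ b, 0 ≤ y b) :
    0 ≤ preSS G v s x y := by
  refine Finset.sum_nonneg fun a _ => Finset.sum_nonneg fun b _ =>
    Finset.sum_nonneg fun t _ => ?_
  have := hv t; have := hG.2.2.1 s a b t; have := hx a; have := hy b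
  positivity

lemma preSS_le_one (G : CGame S M) (hG : G.IsGame) {v : S → ℝ} (hv0 : ∀ t, 0 ≤ v t)
    (hv1 : ∀ t, v t ≤ 1) {s : S} {x y : M → ℝ} (hx : IsDistOn (G.Γ₁ s) x)
    (hy : IsDistOn (G.Γ₂ s) y) : preSS G v s x y ≤ 1 := by
  unfold preSS
  calc ∑ a : M, ∑ b : M, ∑ t : S, v t * G.δ s a b t * x a * y b
      ≤ ∑ a : M, ∑ b : M, ∑ t : S, x a * y b * G.δ s a b t := by
        refine Finset.sum_le_sum fun a _ => Finset.sum_le_sum fun b _ =>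
          Finset.sum_le_sum fun t _ => ?_
        have h1 : 0 ≤ x a * y b * G.δ s a b t := by
          have := hx.1 a; have := hy.1 b; have := hG.2.2.1 s a b t; positivity
        calc v t * G.δ s a b t * x a * y b = v t * (x a * y b * G.δ s a b t) := by ring
          _ ≤ 1 * (x a * y b * G.δ s a b t) := by
              exact mul_le_mul_of_nonneg_right (hv1 t) h1
          _ = x a * y b * G.δ s a b t := by ring
    _ = 1 := by
        have h3 : ∀ a b, (∑ t : S, x a * y b * G.δ s a b t) = x a * y b := by
          intro a b; rw [← Finset.mul_sum, hG.2.2.2 s a b, mul_one]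
        simp only [h3, ← Finset.mul_sum, hy.2.2, mul_one, hx.2.2]

lemma preSS_mono (G : CGame S M) (hG : G.IsGame) {v w : S → ℝ} (hvw : ∀ t, v t ≤ w t)
    {s : S} {x y : M → ℝ} (hx : ∀ a, 0 ≤ x a) (hy : ∀ b, 0 ≤ y b) :
    preSS G v s x y ≤ preSS G w s x y := by
  refine Finset.sum_le_sum fun a _ => Finset.sum_le_sum fun b _ =>
    Finset.sum_le_sum fun t _ => ?_
  have h1 : 0 ≤ G.δ s a b t * x a * y b := by
    have := hx a; have := hy b; have := hG.2.2.1 s a b t; positivity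
  calc v t * G.δ s a b t * x a * y b = v t * (G.δ s a b t * x a * y b) := by ring
    _ ≤ w t * (G.δ s a b t * x a * y b) := mul_le_mul_of_nonneg_right (hvw t) h1
    _ = w t * G.δ s a b t * x a * y b := by ring

lemma preSS_absorbing (G : CGame S M) (hG : G.IsGame) {v : S → ℝ} {s : S}
    (habs : Absorbing G s) {x y : M → ℝ} (hx : IsDistOn (G.Γ₁ s) x)
    (hy : IsDistOn (G.Γ₂ s) y) : preSS G v s x y = v s := by
  unfold preSS
  have hT : ∀ a b, (∑ t : S, v t * G.δ s a b t * x a * y b) = v s * (x a * y b) := by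
    intro a b
    have : ∀ t : S, v t * G.δ s a b t * x a * y b
        = if t = s then v s * (x a * y b) else 0 := by
      intro t
      rw [delta_dirac G hG habs a b t]
      by_cases ht : t = s
      · simp [ht]; ring
      · simp [ht]
    simp only [this]
    simp
  simp only [hT, ← Finset.mul_sum, hy.2.2, mul_one, hx.2.2]

lemma bddBelow_preSS (G : CGame S M) (hG : G.IsGame) {v : S → ℝ} (hv : ∀ t, 0 ≤ v t)
    {s : S} {x : M → ℝ} (hx : ∀ a, 0 ≤ x a) :
    BddBelow (Set.range fun y : {y : M → ℝ // IsDistOn (G.Γ₂ s) y} => preSS G v s x y.1) := by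
  refine ⟨0, ?_⟩
  rintro r ⟨y, rfl⟩
  exact preSS_nonneg G hG hv hx y.2.1

lemma pre1Sel_nonneg (G : CGame S M) (hG : G.IsGame) {v : S → ℝ} (hv : ∀ t, 0 ≤ v t)
    {s : S} {x : M → ℝ} (hx : ∀ a, 0 ≤ x a) : 0 ≤ pre1Sel G v s x := by
  haveI := nonempty_dist2 G hG s
  exact le_ciInf fun y => preSS_nonneg G hG hv hx y.2.1

lemma pre1Sel_le_preSS (G : CGame S M) (hG : G.IsGame) {v : S → ℝ} (hv : ∀ t, 0 ≤ v t)
    {s : S} {x : M → ℝ} (hx : ∀ a, 0 ≤ x a) {y : M → ℝ} (hy : IsDistOn (G.Γ₂ s) y) :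
    pre1Sel G v s x ≤ preSS G v s x y :=
  ciInf_le (bddBelow_preSS G hG hv hx) (⟨y, hy⟩ : {y // IsDistOn (G.Γ₂ s) y})

lemma pre1Sel_le_one (G : CGame S M) (hG : G.IsGame) {v : S → ℝ} (hv0 : ∀ t, 0 ≤ v t)
    (hv1 : ∀ t, v t ≤ 1) {s : S} {x : M → ℝ} (hx : IsDistOn (G.Γ₁ s) x) :
    pre1Sel G v s x ≤ 1 :=
  le_trans (pre1Sel_le_preSS G hG hv0 hx.1 (isDistOn_unif (hG.2.1 s)))
    (preSS_le_one G hG hv0 hv1 hx (isDistOn_unif (hG.2.1 s)))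

lemma pre1Sel_mono (G : CGame S M) (hG : G.IsGame) {v w : S → ℝ} (hv : ∀ t, 0 ≤ v t)
    (hvw : ∀ t, v t ≤ w t) {s : S} {x : M → ℝ} (hx : ∀ a, 0 ≤ x a) :
    pre1Sel G v s x ≤ pre1Sel G w s x := by
  haveI := nonempty_dist2 G hG s
  exact le_ciInf fun y => le_trans
    (ciInf_le (bddBelow_preSS G hG hv hx) y) (preSS_mono G hG hvw hx y.2.1)

lemma pre1Sel_le_pre1 (G : CGame S M) (hG : G.IsGame) {v : S → ℝ} (hv0 : ∀ t, 0 ≤ v t)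
    (hv1 : ∀ t, v t ≤ 1) {s : S} {x : M → ℝ} (hx : IsDistOn (G.Γ₁ s) x) :
    pre1Sel G v s x ≤ pre1 G v s := by
  refine le_ciSup (f := fun x : {x : M → ℝ // IsDistOn (G.Γ₁ s) x} => pre1Sel G v s x.1)
    ⟨1, ?_⟩ (⟨x, hx⟩ : {x // IsDistOn (G.Γ₁ s) x})
  rintro r ⟨x', rfl⟩
  exact pre1Sel_le_one G hG hv0 hv1 x'.2

lemma pre1_le_one (G : CGame S M) (hG : G.IsGame) {v : S → ℝ} (hv0 : ∀ t, 0 ≤ v t)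
    (hv1 : ∀ t, v t ≤ 1) (s : S) : pre1 G v s ≤ 1 := by
  haveI := nonempty_dist1 G hG s
  exact ciSup_le fun x => pre1Sel_le_one G hG hv0 hv1 x.2

lemma pre1_absorbing (G : CGame S M) (hG : G.IsGame) {v : S → ℝ} {s : S}
    (habs : Absorbing G s) : pre1 G v s = v s := by
  haveI := nonempty_dist1 G hG s
  haveI := nonempty_dist2 G hG s
  have h1 : ∀ x : {x : M → ℝ // IsDistOn (G.Γ₁ s) x}, pre1Sel G v s x.1 = v s := by
    intro x
    have : ∀ y : {y : M → ℝ // IsDistOn (G.Γ₂ s) y}, preSS G v s x.1 y.1 = v s :=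
      fun y => preSS_absorbing G hG habs x.2 y.2
    unfold pre1Sel
    rw [funext this, ciInf_const]
  unfold pre1
  rw [funext h1, ciSup_const]

lemma W1_subset (G : CGame S M) (hG : G.IsGame) (F : Set S) : W1 G F ⊆ F := by
  intro s hs
  by_contra hsF
  have h1 : valSafe G F s = 1 := hs
  have h0 : valSafe G F s = 0 := by
    haveI := nonempty_strat1 G hG
    unfold valSafe
    have : ∀ σ₁ : {σ : List S → S → M → ℝ // IsStrat1 G σ},
        valSafeUnder G σ₁.1 F s = 0 := fun σ₁ =>
      valSafeUnder_zero_of_not_mem G hG σ₁.2 F hsF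
    rw [funext this, ciSup_const]
  rw [h1] at h0
  norm_num at h0

/-- Strategy for player 2: play `y` at `s` first, then follow `ρ t` from successor `t`. -/
def buildStrat (s : S) (y : M → ℝ) (d : S → M → ℝ) (ρ : S → List S → S → M → ℝ) :
    List S → S → M → ℝ
  | [], x => if x = s then y else d x
  | [_], x => ρ x [] x
  | _ :: t :: u, x => ρ t (t :: u) x

lemma bellman_le (G : CGame S M) (hG : G.IsGame) (F : Set S) {γ : S → M → ℝ}
    (hγ : IsSel1 G γ) {s : S} (hs : s ∈ F) {y : M → ℝ} (hy : IsDistOn (G.Γ₂ s) y) :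
    valSafeUnder G (ml γ) F s ≤ preSS G (valSafeUnder G (ml γ) F) s (γ s) y := by
  set v := valSafeUnder G (ml γ) F with hvdef
  have h1 := isStrat1_ml hγ
  haveI := nonempty_strat2 G hG
  refine le_of_forall_pos_le_add ?_
  intro ε hε
  have hopt : ∀ t : S, ∃ σ₂ : {σ : List S → S → M → ℝ // IsStrat2 G σ},
      prSafe G (ml γ) σ₂.1 F t < v t + ε := by
    intro t
    exact exists_lt_of_ciInf_lt (lt_add_of_pos_right _ hε)
  choose ρ hρ using hopt
  set σ₂ : List S → S → M → ℝ := buildStrat s y (fun x => unif (G.Γ₂ x))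
    (fun t => (ρ t).1) with hσ₂def
  have hσ₂ : IsStrat2 G σ₂ := by
    intro w x
    match w with
    | [] =>
      show IsDistOn (G.Γ₂ x) (if x = s then y else unif (G.Γ₂ x))
      by_cases hx : x = s
      · subst hx; simpa using hy
      · simp only [if_neg hx]; exact isDistOn_unif (hG.2.1 x)
    | [w1] => exact (ρ x).2 [] x
    | w1 :: t :: u => exact (ρ t).2 (t :: u) x
  have hkey : ∀ (n : ℕ) (t : S),
      safeW G (ml γ) σ₂ F n [s] t = safeW G (ml γ) (ρ t).1 F n [] t := by
    intro n t
    have h := safeW_shift G (ml γ) σ₂ F [s] n [] t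
    rw [List.append_nil] at h
    rw [shiftStrat_ml] at h
    rw [h]
    exact safeW_congr G (ml γ) F n [] t rfl (fun u x => rfl)
  have hchain : ∀ n : ℕ, v s ≤ ∑ a : M, ∑ b : M, ∑ t : S,
      γ s a * y b * G.δ s a b t * safeW G (ml γ) (ρ t).1 F n [] t := by
    intro n
    have hv1 : v s ≤ safeW G (ml γ) σ₂ F (n + 1) [] s :=
      le_trans (valSafeUnder_le_prSafe G hG h1 F s hσ₂)
        (prSafe_le_safeW G hG h1 hσ₂ F s (n + 1))
    simp only [safeW, if_pos hs, List.nil_append] at hv1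
    refine hv1.trans_eq (Finset.sum_congr rfl fun a _ => Finset.sum_congr rfl fun b _ =>
      Finset.sum_congr rfl fun t _ => ?_)
    have e1 : σ₂ [] s b = y b := by
      show (if s = s then y else unif (G.Γ₂ s)) b = y b
      rw [if_pos rfl]
    rw [e1, hkey n t]
    rfl
  have hlim : Filter.Tendsto (fun n : ℕ => ∑ a : M, ∑ b : M, ∑ t : S,
      γ s a * y b * G.δ s a b t * safeW G (ml γ) (ρ t).1 F n [] t) Filter.atTop
      (nhds (∑ a : M, ∑ b : M, ∑ t : S,
        γ s a * y b * G.δ s a b t * prSafe G (ml γ) (ρ t).1 F t)) := by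
    refine tendsto_finset_sum _ fun a _ => tendsto_finset_sum _ fun b _ =>
      tendsto_finset_sum _ fun t _ => ?_
    have hf : Filter.Tendsto (fun n : ℕ => safeW G (ml γ) (ρ t).1 F n [] t) Filter.atTop
        (nhds (prSafe G (ml γ) (ρ t).1 F t)) := by
      refine tendsto_atTop_ciInf (safeW_antitone G hG h1 (ρ t).2 F [] t) ⟨0, ?_⟩
      rintro r ⟨m, rfl⟩
      exact safeW_nonneg G hG h1 (ρ t).2 F m [] t
    exact hf.const_mul _
  have hle2 : v s ≤ ∑ a : M, ∑ b : M, ∑ t : S,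
      γ s a * y b * G.δ s a b t * prSafe G (ml γ) (ρ t).1 F t :=
    ge_of_tendsto' hlim hchain
  refine hle2.trans ?_
  have coeff_nn : ∀ a b t, 0 ≤ γ s a * y b * G.δ s a b t := by
    intro a b t
    have := (hγ s).1 a; have := hy.1 b; have := hG.2.2.1 s a b t
    positivity
  calc ∑ a : M, ∑ b : M, ∑ t : S, γ s a * y b * G.δ s a b t * prSafe G (ml γ) (ρ t).1 F t
      ≤ ∑ a : M, ∑ b : M, ∑ t : S, γ s a * y b * G.δ s a b t * (v t + ε) := by
        refine Finset.sum_le_sum fun a _ => Finset.sum_le_sum fun b _ =>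
          Finset.sum_le_sum fun t _ => ?_
        exact mul_le_mul_of_nonneg_left (le_of_lt (hρ t)) (coeff_nn a b t)
    _ = preSS G v s (γ s) y + ε := by
        have hsplit : ∀ (a b : M) (t : S), γ s a * y b * G.δ s a b t * (v t + ε)
            = v t * G.δ s a b t * γ s a * y b + γ s a * y b * G.δ s a b t * ε := by
          intro a b t; ring
        simp only [hsplit, Finset.sum_add_distrib]
        congr 1
        have hone : ∑ a : M, ∑ b : M, ∑ t : S, γ s a * y b * G.δ s a b t = 1 := by
          have h3 : ∀ a b, (∑ t : S, γ s a * y b * G.δ s a b t) = γ s a * y b := by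
            intro a b; rw [← Finset.mul_sum, hG.2.2.2 s a b, mul_one]
          simp only [h3, ← Finset.mul_sum, hy.2.2, mul_one, (hγ s).2.2]
        simp only [← Finset.sum_mul]
        rw [hone, one_mul]

lemma improvement_aux (G : CGame S M) (hG : G.IsGame) (F : Set S)
    (habs : ∀ s ∈ CGame.W1 G F ∪ Fᶜ, CGame.Absorbing G s)
    (γ γ' : S → M → ℝ) (hγ : CGame.IsSel1 G γ) (hγ' : CGame.IsSel1 G γ')
    (v : S → ℝ) (hv : v = CGame.valSafeUnder G (CGame.ml γ) F)
    (I : Set S)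
    (hI : I = {s | s ∉ CGame.W1 G F ∪ Fᶜ ∧ v s < CGame.pre1 G v s})
    (hagree : ∀ s ∉ I, γ' s = γ s)
    (himp : ∀ s ∈ I, CGame.pre1Sel G v s (γ' s) = CGame.pre1 G v s)
    (v' : S → ℝ) (hv' : v' = CGame.valSafeUnder G (CGame.ml γ') F) :
    (∀ s, CGame.pre1 G v s ≤ v' s) ∧ (∀ s, v s ≤ v' s) ∧ ∀ s ∈ I, v s < v' s := by
  haveI := nonempty_strat2 G hG
  have hml : IsStrat1 G (ml γ) := isStrat1_ml hγ
  have hml' : IsStrat1 G (ml γ') := isStrat1_ml hγ'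
  have hv0 : ∀ t, 0 ≤ v t := fun t => hv ▸ valSafeUnder_nonneg G hG hml F t
  have hv1 : ∀ t, v t ≤ 1 := fun t => hv ▸ valSafeUnder_le_one G hG hml F t
  have hvF : ∀ s, s ∉ F → v s = 0 := fun s hs =>
    hv ▸ valSafeUnder_zero_of_not_mem G hG hml F hs
  have hIF : ∀ s ∈ I, s ∈ F ∧ s ∉ W1 G F ∧ v s < pre1 G v s := by
    intro s hsI
    rw [hI] at hsI
    refine ⟨?_, fun hW => hsI.1 (Or.inl hW), hsI.2⟩
    by_contra hsF
    exact hsI.1 (Or.inr hsF)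
  -- the target function h
  set h : S → ℝ := fun s => if s ∈ F then pre1Sel G v s (γ' s) else 0 with hh
  -- key inequality: v ≤ h
  have hvh : ∀ s, v s ≤ h s := by
    intro s
    by_cases hsF : s ∈ F
    · simp only [hh, if_pos hsF]
      by_cases hsI : s ∈ I
      · rw [himp s hsI]
        exact le_of_lt (hIF s hsI).2.2
      · rw [hagree s hsI]
        haveI := nonempty_dist2 G hG s
        refine le_ciInf fun y => ?_
        rw [hv]
        exact bellman_le G hG F hγ hsF y.2
    · simp only [hh, if_neg hsF]
      exact (hvF s hsF).le
  -- the finite-horizon worst-case values under γ'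
  set g : ℕ → S → ℝ := fun n s =>
    ⨅ σ₂ : {σ : List S → S → M → ℝ // IsStrat2 G σ}, safeW G (ml γ') σ₂.1 F n [] s
    with hgdef
  have hbddg : ∀ (n : ℕ) (s : S), BddBelow (Set.range
      fun σ₂ : {σ : List S → S → M → ℝ // IsStrat2 G σ} => safeW G (ml γ') σ₂.1 F n [] s) := by
    intro n s
    refine ⟨0, ?_⟩
    rintro r ⟨σ₂, rfl⟩
    exact safeW_nonneg G hG hml' σ₂.2 F n [] s
  have hg0 : ∀ n s, 0 ≤ g n s := by
    intro n s
    rw [hgdef]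
    exact le_ciInf fun σ₂ => safeW_nonneg G hG hml' σ₂.2 F n [] s
  have hgle : ∀ (n : ℕ) (s : S) (σ₂ : {σ : List S → S → M → ℝ // IsStrat2 G σ}),
      g n s ≤ safeW G (ml γ') σ₂.1 F n [] s := by
    intro n s σ₂
    rw [hgdef]
    exact ciInf_le (hbddg n s) σ₂
  -- induction: h ≤ g n for all n
  have hA : ∀ (n : ℕ) (s : S), h s ≤ g n s := by
    intro n
    induction n with
    | zero =>
      intro s
      by_cases hsF : s ∈ F
      · have hg1 : g 0 s = 1 := by
          rw [hgdef]
          have : ∀ σ₂ : {σ : List S → S → M → ℝ // IsStrat2 G σ},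
              safeW G (ml γ') σ₂.1 F 0 [] s = 1 := by
            intro σ₂; simp [safeW, hsF]
          simp only [this, ciInf_const]
        rw [hg1]
        simp only [hh, if_pos hsF]
        exact pre1Sel_le_one G hG hv0 hv1 (hγ' s)
      · simp only [hh, if_neg hsF]
        exact hg0 0 s
    | succ n ih =>
      intro s
      by_cases hsF : s ∈ F
      · have hvg : ∀ t, v t ≤ g n t := fun t => (hvh t).trans (ih t)
        simp only [hh, if_pos hsF]
        refine le_trans (pre1Sel_mono G hG hv0 hvg (hγ' s).1) ?_
        rw [hgdef]
        refine le_ciInf fun σ₂ => ?_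
        have hy : IsDistOn (G.Γ₂ s) (σ₂.1 [] s) := σ₂.2 [] s
        refine le_trans (pre1Sel_le_preSS G hG (fun t => hg0 n t) (hγ' s).1 hy) ?_
        simp only [safeW, if_pos hsF, List.nil_append]
        unfold preSS
        refine Finset.sum_le_sum fun a _ => Finset.sum_le_sum fun b _ =>
          Finset.sum_le_sum fun t _ => ?_
        have hs1 : g n t ≤ safeW G (ml γ') σ₂.1 F n [s] t := by
          have hsh := safeW_shift G (ml γ') σ₂.1 F [s] n [] t
          rw [List.append_nil, shiftStrat_ml] at hsh
          rw [hsh]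
          exact hgle n t ⟨shiftStrat σ₂.1 [s], isStrat2_shift σ₂.2 [s]⟩
        have hcn : 0 ≤ γ' s a * σ₂.1 [] s b * G.δ s a b t := by
          have := (hγ' s).1 a; have := hy.1 b; have := hG.2.2.1 s a b t
          positivity
        calc g n t * G.δ s a b t * γ' s a * σ₂.1 [] s b
            = (γ' s a * σ₂.1 [] s b * G.δ s a b t) * g n t := by ring
          _ ≤ (γ' s a * σ₂.1 [] s b * G.δ s a b t) * safeW G (ml γ') σ₂.1 F n [s] t :=
              mul_le_mul_of_nonneg_left hs1 hcn
          _ = ml γ' [] s a * σ₂.1 [] s b * G.δ s a b t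
              * safeW G (ml γ') σ₂.1 F n [s] t := by rfl
      · simp only [hh, if_neg hsF]
        exact hg0 (n + 1) s
  -- h ≤ v'
  have hhv' : ∀ s, h s ≤ v' s := by
    intro s
    rw [hv']
    unfold valSafeUnder prSafe
    refine le_ciInf fun σ₂ => le_ciInf fun n => ?_
    exact (hA n s).trans (hgle n s σ₂)
  have hv'0 : ∀ s, 0 ≤ v' s := fun s => hv' ▸ valSafeUnder_nonneg G hG hml' F s
  -- main part
  have part1 : ∀ s, pre1 G v s ≤ v' s := by
    intro s
    by_cases hsF : s ∈ F
    · by_cases hsW : s ∈ W1 G F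
      · have h1 : v' s = 1 :=
          hv' ▸ valSafeUnder_absorbing G hG hml' F hsF (habs s (Or.inl hsW))
        rw [h1]
        exact pre1_le_one G hG hv0 hv1 s
      · by_cases hsI : s ∈ I
        · have h1 : pre1 G v s = h s := by
            simp only [hh, if_pos hsF, himp s hsI]
          rw [h1]
          exact hhv' s
        · have hnotlt : pre1 G v s ≤ v s := by
            by_contra hlt
            push_neg at hlt
            refine hsI ?_
            rw [hI]
            exact ⟨fun hmem => hmem.elim (fun hw => hsW hw) (fun hc => hc hsF), hlt⟩
          exact hnotlt.trans ((hvh s).trans (hhv' s))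
    · have habs' : Absorbing G s := habs s (Or.inr hsF)
      rw [pre1_absorbing G hG habs', hvF s hsF]
      exact hv'0 s
  exact ⟨part1, fun s => (hvh s).trans (hhv' s),
    fun s hsI => lt_of_lt_of_le (hIF s hsI).2.2 (part1 s)⟩

end Aux

end CGame
/-- **The local strategy-improvement step improves the value (safety).**
Let `γ` be a player-1 selector in a concurrent game with safe set `F`, let
`v = ⟨1⟩val^{ml γ}(Safe F)`, let `I = {s ∉ W₁ ∪ T | Pre₁(v)(s) > v(s)}` (with
`T = S ∖ F`), and let `γ'` agree with `γ` outside `I` and satisfy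
`Pre_{1:γ'}(v)(s) = Pre₁(v)(s) > v(s)` on `I`. Then `v' = ⟨1⟩val^{ml γ'}(Safe F)`
satisfies `v' ≥ Pre₁(v)` pointwise; consequently `v' ≥ v` pointwise, and
`v'(s) > v(s)` for all `s ∈ I`. -/
theorem improvement_step_improves_value_safe
    {S M : Type} [Fintype S] [DecidableEq S] [Fintype M] [DecidableEq M]
    (G : CGame S M) (hG : G.IsGame) (F : Set S)
    (habs : ∀ s ∈ CGame.W1 G F ∪ Fᶜ, CGame.Absorbing G s)
    (γ γ' : S → M → ℝ) (hγ : CGame.IsSel1 G γ) (hγ' : CGame.IsSel1 G γ')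
    (v : S → ℝ) (hv : v = CGame.valSafeUnder G (CGame.ml γ) F)
    (I : Set S)
    (hI : I = {s | s ∉ CGame.W1 G F ∪ Fᶜ ∧ v s < CGame.pre1 G v s})
    (hagree : ∀ s ∉ I, γ' s = γ s)
    (himp : ∀ s ∈ I, CGame.pre1Sel G v s (γ' s) = CGame.pre1 G v s)
    (v' : S → ℝ) (hv' : v' = CGame.valSafeUnder G (CGame.ml γ') F) :
    (∀ s, CGame.pre1 G v s ≤ v' s) ∧ (∀ s, v s ≤ v' s) ∧ ∀ s ∈ I, v s < v' s := by
  exact CGame.improvement_aux G hG F habs γ γ' hγ hγ' v hv I hI hagree himp v' hv'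
end

section
/- Let a₁, a₂, …, a_m be real numbers such that aᵢ > 0 for all 1 ≤ i ≤ m and Σ_{i=1}^m aᵢ = 1, and let c = min_{1≤i≤m} aᵢ. Then for every η > 0 there exist an integer k ≥ m/(c·η) and real numbers b₁, b₂, …, b_m such that: (1) each bᵢ is a positive multiple of 1/k; (2) Σ_{i=1}^m bᵢ = 1; and (3) for all 1 ≤ i ≤ m, aᵢ/bᵢ ≤ 1 + η and bᵢ/aᵢ ≤ 1 + η. -/
/-!
Take `k ≥ (m + η) / (c η)`, round every `k aᵢ` down to `⌊k aᵢ⌋`, and give the whole deficit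
`k - ∑ ⌊k aⱼ⌋`, a natural number smaller than `m`, to a single index. Every numerator then lies in
`(k aᵢ - 1, k aᵢ + m)`, and since `k aᵢ η ≥ k c η ≥ m + η`, this interval lies in
`[k aᵢ / (1 + η), (1 + η) k aᵢ]`.
-/

open Finset

noncomputable def floorRounding {ι : Type*} [Fintype ι] [DecidableEq ι] (k : ℕ) (a : ι → ℝ)
    (i₀ i : ι) : ℕ :=
  ⌊k * a i⌋₊ + if i = i₀ then k - ∑ j, ⌊k * a j⌋₊ else 0

theorem mul_sub_one_lt_floorRounding {ι : Type*} [Fintype ι] [DecidableEq ι] (k : ℕ)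
    (a : ι → ℝ) (i₀ i : ι) : k * a i - 1 < floorRounding k a i₀ i := by
  have : (⌊k * a i⌋₊ : ℝ) ≤ floorRounding k a i₀ i := by exact_mod_cast Nat.le_add_right _ _
  linarith [Nat.sub_one_lt_floor (k * a i)]

section FloorRounding

variable {ι : Type*} [Fintype ι] {a : ι → ℝ} (k : ℕ)
variable (ha : ∀ i, 0 ≤ a i) (hsum : ∑ i, a i = 1)
include ha hsum

theorem sum_floor_mul_le : ∑ j, ⌊k * a j⌋₊ ≤ k := by
  have hle : ∑ j, (⌊k * a j⌋₊ : ℝ) ≤ k := calc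
    ∑ j, (⌊k * a j⌋₊ : ℝ) ≤ ∑ j, k * a j :=
      sum_le_sum fun j _ => Nat.floor_le (mul_nonneg k.cast_nonneg (ha j))
    _ = k := by rw [← mul_sum, hsum, mul_one]
  exact_mod_cast hle

theorem sub_sum_floor_mul_lt_card [Nonempty ι] :
    ((k - ∑ j, ⌊k * a j⌋₊ : ℕ) : ℝ) < Fintype.card ι := by
  rw [Nat.cast_sub (sum_floor_mul_le k ha hsum), Nat.cast_sum]
  calc (k : ℝ) - ∑ j, (⌊k * a j⌋₊ : ℝ) = ∑ j, (k * a j - ⌊k * a j⌋₊) := by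
        rw [sum_sub_distrib, ← mul_sum, hsum, mul_one]
    _ < ∑ _j : ι, (1 : ℝ) :=
        sum_lt_sum_of_nonempty univ_nonempty fun j _ => by
          linarith [Nat.lt_floor_add_one (k * a j)]
    _ = Fintype.card ι := by simp

variable [DecidableEq ι]

theorem sum_floorRounding (i₀ : ι) : ∑ i, floorRounding k a i₀ i = k := by
  simp only [floorRounding, sum_add_distrib, sum_ite_eq', mem_univ, if_true]
  exact Nat.add_sub_cancel' (sum_floor_mul_le k ha hsum)

theorem floorRounding_lt_mul_add_card (i₀ i : ι) :
    (floorRounding k a i₀ i : ℝ) < k * a i + Fintype.card ι := by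
  have : Nonempty ι := ⟨i⟩
  have hfloor : (⌊k * a i⌋₊ : ℝ) ≤ k * a i := Nat.floor_le (mul_nonneg k.cast_nonneg (ha i))
  have hdef := sub_sum_floor_mul_lt_card k ha hsum
  unfold floorRounding
  split_ifs <;> push_cast <;> linarith [Fintype.card_pos (α := ι)]

end FloorRounding

theorem exists_nat_sum_eq_and_approx {ι : Type*} [Fintype ι] (a : ι → ℝ) (ha : ∀ i, 0 ≤ a i)
    (hsum : ∑ i, a i = 1) {c η : ℝ} (hc : ∀ i, c ≤ a i) (hη : 0 < η) (k : ℕ)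
    (hk : Fintype.card ι + η ≤ k * c * η) :
    ∃ n : ι → ℕ, ∑ i, n i = k ∧
      ∀ i, k * a i ≤ (1 + η) * n i ∧ (n i : ℝ) ≤ (1 + η) * (k * a i) := by
  classical
  obtain ⟨i₀⟩ : Nonempty ι := univ_nonempty_iff.mp (nonempty_of_sum_ne_zero (hsum ▸ one_ne_zero))
  refine ⟨floorRounding k a i₀, sum_floorRounding k ha hsum i₀, fun i => ⟨?_, ?_⟩⟩
  · have hcard : (1 : ℝ) ≤ Fintype.card ι := by exact_mod_cast Fintype.card_pos_iff.mpr ⟨i₀⟩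
    have hka : 1 + η ≤ k * a i * η := by
      nlinarith [mul_le_mul_of_nonneg_left (hc i) (mul_nonneg k.cast_nonneg hη.le)]
    nlinarith [mul_sub_one_lt_floorRounding k a i₀ i]
  · have hka : (Fintype.card ι : ℝ) ≤ k * a i * η := by
      nlinarith [mul_le_mul_of_nonneg_left (hc i) (mul_nonneg k.cast_nonneg hη.le)]
    linarith [floorRounding_lt_mul_add_card k ha hsum i₀ i]

theorem div_le_one_add_and_div_le_one_add {a b η : ℝ} (ha : 0 < a) (hη : 0 ≤ η)
    (hab : a ≤ (1 + η) * b) (hba : b ≤ (1 + η) * a) : a / b ≤ 1 + η ∧ b / a ≤ 1 + η := by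
  have hb : 0 < b := pos_of_mul_pos_right (ha.trans_le hab) (by linarith)
  exact ⟨(div_le_iff₀ hb).mpr (by linarith), (div_le_iff₀ ha).mpr (by linarith)⟩

theorem rational_approximation_of_distribution_general
    (m : ℕ) (a : Fin m → ℝ) (ha : ∀ i, 0 < a i)
    (hsum : (∑ i, a i) = 1) (c : ℝ) (hc : c = ⨅ i, a i)
    (η : ℝ) (hη : 0 < η) :
    ∃ (k : ℕ) (b : Fin m → ℝ),
      (m : ℝ) / (c * η) ≤ (k : ℝ) ∧
      (∀ i, ∃ j : ℕ, 0 < j ∧ b i = (j : ℝ) / (k : ℝ)) ∧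
      (∑ i, b i) = 1 ∧
      ∀ i, a i / b i ≤ 1 + η ∧ b i / a i ≤ 1 + η := by
  have : Nonempty (Fin m) := univ_nonempty_iff.mp (nonempty_of_sum_ne_zero (hsum ▸ one_ne_zero))
  have hc_le (i) : c ≤ a i := hc ▸ ciInf_le (Finite.bddBelow_range a) i
  have hcη : 0 < c * η := by
    obtain ⟨i₀, hi₀⟩ := exists_eq_ciInf_of_finite (f := a)
    exact mul_pos (hc ▸ hi₀ ▸ ha i₀) hη
  set k := ⌈(m + η) / (c * η)⌉₊
  have hk : (m + η) / (c * η) ≤ k := Nat.le_ceil _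
  obtain ⟨n, hn_sum, hn⟩ := exists_nat_sum_eq_and_approx a (fun i => (ha i).le) hsum hc_le hη k
    (by rw [Fintype.card_fin, mul_assoc]; exact (div_le_iff₀ hcη).mp hk)
  have hk_pos : (0 : ℝ) < k := (div_pos (by positivity) hcη).trans_le hk
  have hb (i) := div_le_one_add_and_div_le_one_add (b := n i / k) (ha i) hη.le
    (by rw [mul_div_assoc', le_div_iff₀' hk_pos]; exact (hn i).1)
    (by rw [div_le_iff₀' hk_pos, mul_left_comm]; exact (hn i).2)
  refine ⟨k, fun i => n i / k, (div_le_div_of_nonneg_right (by linarith) hcη.le).trans hk,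
    fun i => ⟨n i, ?_, rfl⟩, ?_, hb⟩
  · have hpos := (hn i).1
    contrapose! hpos
    rw [Nat.le_zero.mp hpos, Nat.cast_zero, mul_zero]
    exact mul_pos hk_pos (ha i)
  · rw [← sum_div, ← Nat.cast_sum, hn_sum, div_self hk_pos.ne']

/-- **Rational approximation of probability distributions.**
Let `a₁, …, a_m` be positive reals summing to 1 and let `c = min_i a_i`. For every
`η > 0` there exist an integer `k ≥ m/(c·η)` and reals `b₁, …, b_m` such that each
`b i` is a positive multiple of `1/k`, the `b i` sum to 1, and for all `i`,
`a i / b i ≤ 1 + η` and `b i / a i ≤ 1 + η`. -/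
theorem rational_approximation_of_distribution
    (m : ℕ) (hm : 0 < m) (a : Fin m → ℝ) (ha : ∀ i, 0 < a i)
    (hsum : (∑ i, a i) = 1) (c : ℝ) (hc : c = ⨅ i, a i)
    (η : ℝ) (hη : 0 < η) :
    ∃ (k : ℕ) (b : Fin m → ℝ),
      (m : ℝ) / (c * η) ≤ (k : ℝ) ∧
      (∀ i, ∃ j : ℕ, 0 < j ∧ b i = (j : ℝ) / (k : ℝ)) ∧
      (∑ i, b i) = 1 ∧
      ∀ i, a i / b i ≤ 1 + η ∧ b i / a i ≤ 1 + η :=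
  rational_approximation_of_distribution_general m a ha hsum c hc η hη
end
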